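/- Let n ≥ 1 and let K = ℚ(X_0,…,X_{n−1},Y_1,…,Y_n,p) be the rational function field in the 2n+1 indicated variables. Define W_n(X,Y,p) := Σ_{w∈S_n} p^{−l(w)} Σ_{J⊆{1,…,n−1}, J⊇ν(w)} W_{n,J}(X,Y). Then W_n(X^{−1},Y^{−1},p^{−1}) = (−1)^n · p^{n(n−1)/2} · W_n(X,Y,p), where on the left every one of the variables X_0,…,X_{n−1},Y_1,…,Y_n,p is replaced by its multiplicative inverse. -/

import Mathlib

/-- The descent set ν(w) ⊆ {1,…,n−1} of a permutation w of {1,…,n}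
(realized as `Equiv.Perm (Fin n)` via 0-indexing: position i corresponds to `⟨i-1,_⟩`). -/
def descents {n : ℕ} (w : Equiv.Perm (Fin n)) : Finset ℕ :=
  (Finset.Icc 1 (n - 1)).filter fun i =>
    ∃ hi : i < n, w ⟨i, hi⟩ < w ⟨i - 1, Nat.lt_of_le_of_lt (Nat.sub_le i 1) hi⟩

/-- The number of inversions l(w) of a permutation. -/
def invCount {n : ℕ} (w : Equiv.Perm (Fin n)) : ℕ :=
  (Finset.univ.filter fun q : Fin n × Fin n => q.1 < q.2 ∧ w q.2 < w q.1).card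

/-- The rational expression `W_{n,I}(X,Y)` over a field, with `Z̲ := Z/(1-Z)`. -/
noncomputable def Wrat {K : Type*} [Field K] (n : ℕ) (I : Finset ℕ) (X Y : ℕ → K) : K :=
  (X 0 / (1 - X 0)) * ∏ i ∈ I, X i / (1 - X i)
  + (Y n / (1 - Y n)) * ∏ i ∈ I, Y i / (1 - Y i)
  + ∑ j ∈ I, (∏ i ∈ I.filter (· ≤ j), Y i / (1 - Y i)) *
      ∏ i ∈ I.filter (fun i => j ≤ i), X i / (1 - X i)
  + ∑ j ∈ insert n I, (∏ i ∈ I.filter (· < j), Y i / (1 - Y i)) *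
      ∏ i ∈ I.filter (fun i => j ≤ i), X i / (1 - X i)

/-- `W_n(X,Y,p) = Σ_{w∈S_n} p^{−l(w)} Σ_{J ⊆ {1,…,n−1}, J ⊇ ν(w)} W_{n,J}(X,Y)`. -/
noncomputable def Wtotal {K : Type*} [Field K] (n : ℕ) (X Y : ℕ → K) (p : K) : K :=
  ∑ w : Equiv.Perm (Fin n),
    p ^ (-(invCount w : ℤ)) *
      ∑ J ∈ (Finset.Icc 1 (n - 1)).powerset.filter (fun J => descents w ⊆ J),
        Wrat n J X Y

/-- The rational function field ℚ(X_0,…,X_{n−1},Y_1,…,Y_n,p) in 2n+1 variables. -/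
abbrev KXYp (n : ℕ) := FractionRing (MvPolynomial (Fin n ⊕ Fin n ⊕ Unit) ℚ)

/-- The variable X_i (0 ≤ i ≤ n−1); junk value 1 outside range. -/
noncomputable def Xvar (n : ℕ) (i : ℕ) : KXYp n :=
  if h : i < n then algebraMap (MvPolynomial (Fin n ⊕ Fin n ⊕ Unit) ℚ) (KXYp n)
    (MvPolynomial.X (Sum.inl ⟨i, h⟩)) else 1

/-- The variable Y_i (1 ≤ i ≤ n); junk value 1 outside range. -/
noncomputable def Yvar (n : ℕ) (i : ℕ) : KXYp n :=
  if h : 1 ≤ i ∧ i ≤ n then algebraMap (MvPolynomial (Fin n ⊕ Fin n ⊕ Unit) ℚ) (KXYp n)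
    (MvPolynomial.X (Sum.inr (Sum.inl ⟨i - 1, by omega⟩))) else 1

/-- The variable p. -/
noncomputable def pvar (n : ℕ) : KXYp n :=
  algebraMap (MvPolynomial (Fin n ⊕ Fin n ⊕ Unit) ℚ) (KXYp n)
    (MvPolynomial.X (Sum.inr (Sum.inr ())))

/-! Write `u = X̲`, `v = Y̲`. Since `z⁻¹/(1 - z⁻¹) = -1 - z/(1 - z)`, the substitution `X, Y ↦ X⁻¹, Y⁻¹` becomes
`u, v ↦ -1 - u, -1 - v`. Apart from `X̲_0 ∏_J u`, `W_{n,J}` is a sum over the place where a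
product of `v`'s switches to a product of `u`'s, so adjoining a new minimum `k` to `J` acts
on the pair `(W_{n,J} - X̲_0 ∏_J u, ∏_J u)` by a triangular matrix depending on `u_k, v_k`.
Summing over the Boolean interval `D ⊆ J ⊆ S` turns this into a product of such matrices, one
for each `k ∈ S`, which depends on whether `k ∈ D`; the substitution `u, v ↦ -1 - u, -1 - v`
conjugates every factor, up to sign, into the factor for the opposite condition. Hence
`∑_{D ⊆ J ⊆ S} W_{n,J}(X⁻¹, Y⁻¹) = (-1)ⁿ ∑_{S \ D ⊆ J ⊆ S} W_{n,J}(X, Y)` for `S = {1, …, n-1}`.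
Finally `w ↦ w₀ w`, with `w₀` the longest permutation, exchanges `ν(w)` with its complement in
`S` and `l(w)` with `n(n-1)/2 - l(w)`. -/

open Finset Equiv

section SwitchSum

variable {R α : Type*} [CommRing R] [LinearOrder α]

def switchSum (u v : α → R) (w : R) (J : Finset α) : R :=
  (1 + w) * ∏ i ∈ J, v i
    + ∑ j ∈ J, (∏ i ∈ J with i < j, v i) * ((1 + v j) * u j) * ∏ i ∈ J with j < i, u i

theorem switchSum_congr {u u' v v' : α → R} (w : R) {J : Finset α}
    (hu : ∀ i ∈ J, u i = u' i) (hv : ∀ i ∈ J, v i = v' i) :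
    switchSum u v w J = switchSum u' v' w J := by
  unfold switchSum
  rw [prod_congr rfl hv]
  congr 1
  refine sum_congr rfl fun j hj => ?_
  rw [prod_congr rfl fun i hi => hv i (mem_filter.mp hi).1, hu j hj, hv j hj,
    prod_congr rfl fun i hi => hu i (mem_filter.mp hi).1]

theorem switchSum_insert_of_lt (u v : α → R) (w : R) {k : α} {J : Finset α}
    (hk : ∀ i ∈ J, k < i) :
    switchSum u v w (insert k J) = v k * switchSum u v w J + (1 + v k) * u k * ∏ i ∈ J, u i := by
  have hkJ : k ∉ J := fun h => (hk k h).false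
  have below_k : (insert k J).filter (· < k) = ∅ := by
    rw [filter_insert, if_neg (lt_irrefl k), filter_eq_empty_iff]
    exact fun i hi => (hk i hi).asymm
  have above_k : (insert k J).filter (k < ·) = J := by
    rw [filter_insert, if_neg (lt_irrefl k), filter_true_of_mem hk]
  have summand : ∀ j ∈ J, (∏ i ∈ insert k J with i < j, v i) * ((1 + v j) * u j)
      * ∏ i ∈ insert k J with j < i, u i
      = v k * ((∏ i ∈ J with i < j, v i) * ((1 + v j) * u j) * ∏ i ∈ J with j < i, u i) := by
    intro j hj
    rw [filter_insert, if_pos (hk j hj), filter_insert, if_neg (hk j hj).asymm,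
      prod_insert (by simp [hkJ])]
    ring
  rw [switchSum, switchSum, sum_insert hkJ, prod_insert hkJ, below_k, above_k,
    sum_congr rfl summand, ← mul_sum, prod_empty]
  ring

theorem filter_le_eq_insert_filter_lt {J : Finset α} {j : α} (hj : j ∈ J) :
    J.filter (· ≤ j) = insert j (J.filter (· < j)) := by
  ext i; simp only [mem_filter, mem_insert, le_iff_lt_or_eq]; aesop

theorem filter_ge_eq_insert_filter_gt {J : Finset α} {j : α} (hj : j ∈ J) :
    J.filter (j ≤ ·) = insert j (J.filter (j < ·)) := by
  ext i; simp only [mem_filter, mem_insert, le_iff_lt_or_eq]; aesop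

theorem sum_Icc_filter_insert {M : Type*} [AddCommMonoid M] (d : α → Prop) [DecidablePred d]
    (f : Finset α → M) {k : α} {S : Finset α} (hk : k ∉ S) :
    ∑ J ∈ Icc ((insert k S).filter d) (insert k S), f J
      = (if d k then 0 else ∑ J ∈ Icc (S.filter d) S, f J)
        + ∑ J ∈ Icc (S.filter d) S, f (insert k J) := by
  have without_k : ∀ J ∈ S.powerset, (insert k S).filter d ⊆ J ↔ ¬ d k ∧ S.filter d ⊆ J := by
    intro J hJ
    have hkJ : k ∉ J := fun h => hk (mem_powerset.mp hJ h)
    rw [filter_insert]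
    split_ifs with hd <;> simp [hkJ, insert_subset_iff, hd]
  have with_k : ∀ J ∈ S.powerset, (insert k S).filter d ⊆ insert k J ↔ S.filter d ⊆ J := by
    intro J hJ
    rw [filter_insert]
    split_ifs
    · exact insert_subset_insert_iff (by simp [hk])
    · exact subset_insert_iff_of_notMem (by simp [hk])
  simp only [Icc_eq_filter_powerset]
  rw [sum_filter, sum_powerset_insert hk, sum_filter, sum_filter,
    sum_congr rfl fun J hJ => if_congr (without_k J hJ) rfl rfl,
    sum_congr rfl fun J hJ => if_congr (with_k J hJ) rfl rfl]
  split_ifs with hd <;> simp [hd]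

theorem sum_Icc_prod_neg_one_sub (u : α → R) (d : α → Prop) [DecidablePred d] (S : Finset α) :
    ∑ J ∈ Icc (S.filter d) S, ∏ i ∈ J, (-1 - u i)
      = (-1) ^ #S * ∑ J ∈ Icc (S.filter (¬ d ·)) S, ∏ i ∈ J, u i := by
  induction S using Finset.induction_on_min with
  | empty => simp
  | insert k S hk ih =>
    have hkS : k ∉ S := fun h => (hk k h).false
    have hkJ : ∀ {T J : Finset α}, J ∈ Icc T S → k ∉ J := fun hJ h => hkS ((mem_Icc.mp hJ).2 h)
    rw [sum_Icc_filter_insert _ _ hkS, sum_Icc_filter_insert _ _ hkS,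
      sum_congr rfl fun J hJ => prod_insert (hkJ hJ), sum_congr rfl fun J hJ => prod_insert (hkJ hJ),
      ← mul_sum, ← mul_sum, ih, card_insert_of_notMem hkS]
    split_ifs <;> ring

theorem sum_Icc_switchSum_neg_one_sub (u v : α → R) (w : R) (d : α → Prop) [DecidablePred d]
    (S : Finset α) :
    ∑ J ∈ Icc (S.filter d) S, switchSum (fun i => -1 - u i) (fun i => -1 - v i) (-1 - w) J
      = (-1) ^ (#S + 1) * (∑ J ∈ Icc (S.filter (¬ d ·)) S, switchSum u v w J
          - ∑ J ∈ Icc (S.filter (¬ d ·)) S, ∏ i ∈ J, u i) := by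
  induction S using Finset.induction_on_min with
  | empty => simp [switchSum]; ring
  | insert k S hk ih =>
    have hkS : k ∉ S := fun h => (hk k h).false
    have hkJ : ∀ {T J : Finset α}, J ∈ Icc T S → k ∉ J := fun hJ h => hkS ((mem_Icc.mp hJ).2 h)
    have hlt : ∀ {T J : Finset α}, J ∈ Icc T S → ∀ i ∈ J, k < i :=
      fun hJ i hi => hk i ((mem_Icc.mp hJ).2 hi)
    rw [sum_Icc_filter_insert _ _ hkS, sum_Icc_filter_insert _ _ hkS,
      sum_Icc_filter_insert _ _ hkS,
      sum_congr rfl fun J hJ => switchSum_insert_of_lt _ _ _ (hlt hJ),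
      sum_congr rfl fun J hJ => switchSum_insert_of_lt _ _ _ (hlt hJ),
      sum_congr rfl fun J hJ => prod_insert (hkJ hJ), sum_add_distrib, sum_add_distrib]
    simp only [← mul_sum]
    rw [ih, sum_Icc_prod_neg_one_sub, card_insert_of_notMem hkS]
    split_ifs <;> ring

end SwitchSum

section Wrat

variable {K : Type*} [Field K]

theorem inv_div_one_sub_inv {z : K} (h0 : z ≠ 0) (h1 : z ≠ 1) :
    z⁻¹ / (1 - z⁻¹) = -1 - z / (1 - z) := by
  have : 1 - z ≠ 0 := sub_ne_zero.mpr h1.symm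
  field_simp
  ring

theorem Wrat_eq {n : ℕ} {J : Finset ℕ} (hJ : ∀ i ∈ J, i < n) (X Y : ℕ → K) :
    Wrat n J X Y = X 0 / (1 - X 0) * ∏ i ∈ J, X i / (1 - X i)
      + switchSum (fun i => X i / (1 - X i)) (fun i => Y i / (1 - Y i)) (Y n / (1 - Y n)) J := by
  set u : ℕ → K := fun i => X i / (1 - X i)
  set v : ℕ → K := fun i => Y i / (1 - Y i)
  have summand : ∀ j ∈ J, (∏ i ∈ J with i ≤ j, v i) * ∏ i ∈ J with j ≤ i, u i
      + (∏ i ∈ J with i < j, v i) * ∏ i ∈ J with j ≤ i, u i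
      = (∏ i ∈ J with i < j, v i) * ((1 + v j) * u j) * ∏ i ∈ J with j < i, u i := by
    intro j hj
    rw [filter_le_eq_insert_filter_lt hj, filter_ge_eq_insert_filter_gt hj,
      prod_insert (by simp), prod_insert (by simp)]
    ring
  have hnJ : n ∉ J := fun h => (hJ n h).false
  rw [Wrat, sum_insert hnJ, filter_true_of_mem hJ,
    filter_false_of_mem fun i hi => not_le.mpr (hJ i hi), prod_empty, switchSum,
    ← sum_congr rfl summand, sum_add_distrib]
  ring

theorem Wrat_inv {n : ℕ} (hn : 1 ≤ n) {X Y : ℕ → K}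
    (hX : ∀ i < n, X i ≠ 0 ∧ X i ≠ 1) (hY : ∀ i ∈ Icc 1 n, Y i ≠ 0 ∧ Y i ≠ 1)
    {J : Finset ℕ} (hJ : J ⊆ Icc 1 (n - 1)) :
    Wrat n J (fun i => (X i)⁻¹) (fun i => (Y i)⁻¹)
      = (-1 - X 0 / (1 - X 0)) * ∏ i ∈ J, (-1 - X i / (1 - X i))
        + switchSum (fun i => -1 - X i / (1 - X i)) (fun i => -1 - Y i / (1 - Y i))
            (-1 - Y n / (1 - Y n)) J := by
  have hX' : ∀ i < n, (X i)⁻¹ / (1 - (X i)⁻¹) = -1 - X i / (1 - X i) :=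
    fun i hi => inv_div_one_sub_inv (hX i hi).1 (hX i hi).2
  have hY' : ∀ i ∈ Icc 1 n, (Y i)⁻¹ / (1 - (Y i)⁻¹) = -1 - Y i / (1 - Y i) :=
    fun i hi => inv_div_one_sub_inv (hY i hi).1 (hY i hi).2
  have hJX : ∀ i ∈ J, i < n := fun i hi => by have := mem_Icc.mp (hJ hi); omega
  have hJY : ∀ i ∈ J, i ∈ Icc 1 n := fun i hi => by have := mem_Icc.mp (hJ hi); simp; omega
  rw [Wrat_eq hJX, hX' 0 hn, hY' n (by simp; omega),
    prod_congr rfl fun i hi => hX' i (hJX i hi),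
    switchSum_congr _ (fun i hi => hX' i (hJX i hi)) (fun i hi => hY' i (hJY i hi))]

theorem sum_Icc_Wrat_inv {n : ℕ} (hn : 1 ≤ n) {X Y : ℕ → K}
    (hX : ∀ i < n, X i ≠ 0 ∧ X i ≠ 1) (hY : ∀ i ∈ Icc 1 n, Y i ≠ 0 ∧ Y i ≠ 1)
    {D : Finset ℕ} (hD : D ⊆ Icc 1 (n - 1)) :
    ∑ J ∈ Icc D (Icc 1 (n - 1)), Wrat n J (fun i => (X i)⁻¹) (fun i => (Y i)⁻¹)
      = (-1) ^ n * ∑ J ∈ Icc (Icc 1 (n - 1) \ D) (Icc 1 (n - 1)), Wrat n J X Y := by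
  set S := Icc 1 (n - 1)
  have hSn : ∀ {T J : Finset ℕ}, J ∈ Icc T S → ∀ i ∈ J, i < n := fun hJ i hi => by
    have := mem_Icc.mp ((mem_Icc.mp hJ).2 hi); omega
  have hD' : Icc D S = Icc (S.filter (· ∈ D)) S := by
    rw [filter_mem_eq_inter, inter_eq_right.mpr hD]
  have hsign : (-1 : K) ^ n = (-1) ^ (#S + 1) := by congr 1; simp [S]; omega
  rw [hsign, sum_congr rfl fun J hJ => Wrat_inv hn hX hY (mem_Icc.mp hJ).2,
    sum_congr rfl fun J hJ => Wrat_eq (hSn hJ) X Y, sum_add_distrib, sum_add_distrib,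
    ← mul_sum, ← mul_sum, sdiff_eq_filter, hD', sum_Icc_prod_neg_one_sub,
    sum_Icc_switchSum_neg_one_sub]
  ring

end Wrat

theorem invCount_add_invCount_revPerm_mul {n : ℕ} (w : Perm (Fin n)) :
    invCount w + invCount (Fin.revPerm * w) = n.choose 2 := by
  have hpairs := Fintype.card_product_filter_lt (α := Fin n)
  rw [Fintype.card_fin] at hpairs
  rw [invCount, invCount, ← hpairs, ← card_filter_add_card_filter_not
    (s := univ.filter fun q : Fin n × Fin n => q.1 < q.2) (fun q => w q.2 < w q.1),
    filter_filter, filter_filter]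
  congr 2
  exact filter_congr fun q _ => and_congr_right fun hq => by
    simp only [Perm.mul_apply, Fin.revPerm_apply, Fin.rev_lt_rev, not_lt]
    exact lt_iff_le_and_ne.trans (and_iff_left (w.injective.ne hq.ne))

theorem descents_revPerm_mul {n : ℕ} (w : Perm (Fin n)) :
    descents (Fin.revPerm * w) = Icc 1 (n - 1) \ descents w := by
  ext i
  simp only [descents, mem_sdiff, mem_filter, Perm.mul_apply, Fin.revPerm_apply, Fin.rev_lt_rev]
  constructor
  · rintro ⟨hi, hlt, hdesc⟩
    exact ⟨hi, fun ⟨_, _, hdesc'⟩ => hdesc.asymm hdesc'⟩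
  · rintro ⟨hi, hasc⟩
    have hi' := mem_Icc.mp hi
    have hin : i < n := by omega
    refine ⟨hi, hin, lt_of_le_of_ne (not_lt.mp fun h => hasc ⟨hi, hin, h⟩) (w.injective.ne ?_)⟩
    simp only [ne_eq, Fin.mk.injEq]
    omega

theorem MvPolynomial.algebraMap_X_ne_zero_and_ne_one {σ R : Type*} [CommRing R] [IsDomain R]
    (s : σ) :
    algebraMap (MvPolynomial σ R) (FractionRing (MvPolynomial σ R)) (X s) ≠ 0 ∧
      algebraMap (MvPolynomial σ R) (FractionRing (MvPolynomial σ R)) (X s) ≠ 1 := by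
  have hinj := IsFractionRing.injective (MvPolynomial σ R) (FractionRing (MvPolynomial σ R))
  refine ⟨(map_ne_zero_iff _ hinj).mpr (X_ne_zero s), fun h => ?_⟩
  have h1 : (X s : MvPolynomial σ R) = 1 := hinj (by rw [h, map_one])
  simpa using congrArg constantCoeff h1

theorem Xvar_ne_zero_and_ne_one {n i : ℕ} (hi : i < n) : Xvar n i ≠ 0 ∧ Xvar n i ≠ 1 := by
  rw [Xvar, dif_pos hi]
  exact MvPolynomial.algebraMap_X_ne_zero_and_ne_one _

theorem Yvar_ne_zero_and_ne_one {n i : ℕ} (hi : i ∈ Icc 1 n) : Yvar n i ≠ 0 ∧ Yvar n i ≠ 1 := by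
  rw [Yvar, dif_pos (mem_Icc.mp hi)]
  exact MvPolynomial.algebraMap_X_ne_zero_and_ne_one _

theorem Wtotal_functional_equation (n : ℕ) (hn : 1 ≤ n) :
    Wtotal n (fun i => (Xvar n i)⁻¹) (fun i => (Yvar n i)⁻¹) (pvar n)⁻¹ =
      (-1) ^ n * pvar n ^ (n * (n - 1) / 2) * Wtotal n (Xvar n) (Yvar n) (pvar n) := by
  have hp : pvar n ≠ 0 := (MvPolynomial.algebraMap_X_ne_zero_and_ne_one _).1
  simp only [Wtotal, ← Icc_eq_filter_powerset]
  rw [mul_sum]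
  refine Fintype.sum_equiv (Equiv.mulLeft Fin.revPerm) _ _ fun w => ?_
  simp only [Equiv.coe_mulLeft]
  have hpow : (pvar n)⁻¹ ^ (-(invCount w : ℤ))
      = pvar n ^ (n * (n - 1) / 2) * pvar n ^ (-(invCount (Fin.revPerm * w) : ℤ)) := by
    rw [← Nat.choose_two_right, ← invCount_add_invCount_revPerm_mul w, inv_zpow', neg_neg,
      ← zpow_natCast, ← zpow_add₀ hp]
    congr 1
    push_cast
    ring
  rw [sum_Icc_Wrat_inv hn (fun i hi => Xvar_ne_zero_and_ne_one hi)
      (fun i hi => Yvar_ne_zero_and_ne_one hi) (D := descents w) (filter_subset _ _),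
    descents_revPerm_mul, hpow]
  ring
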